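/- Let f_{1,θ}(a) = i e^{iθ}(a-1)² ∫₀¹ √(t(1-t)) √(t(a-1)+2) dt on ℂ \ (-∞,-1]. Then a = 1 is the unique critical point of the harmonic function u(a) = Re f_{1,θ}(a) on the zero level set of u: there is no a ≠ 1 in ℂ \ (-∞,-1] with Re f_{1,θ}(a) = 0 and f'_{1,θ}(a) = 0. -/

import Mathlib

open Complex Set intervalIntegral

noncomputable section

/-- The ray `(-∞, -1]` viewed as a subset of `ℂ`. -/
def negRay : Set ℂ := {z : ℂ | z.im = 0 ∧ z.re ≤ -1}

/-- `f_{1,θ}(a) = i e^{iθ} (a-1)² ∫₀¹ √(t(1-t)) √(t(a-1)+2) dt` with principal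
square roots, well defined on `ℂ \ (-∞,-1]`. -/
def fOne (θ : ℝ) (a : ℂ) : ℂ :=
  Complex.I * Complex.exp (Complex.I * θ) * (a - 1) ^ 2 *
    ∫ t in (0:ℝ)..1, (Real.sqrt (t * (1 - t)) : ℂ) * (((t : ℂ) * (a - 1) + 2) ^ ((1:ℂ)/2))


/-!
Write `u = √(t(a-1)+2)`. Differentiating under the integral sign and using `(a-1)t = u² - 2`
gives `f'_{1,θ}(a) = i e^{iθ} (a-1) ∫₀¹ √(t(1-t)) (5u/2 - 1/u) dt`, so it suffices that this
integral never vanishes off the ray. As `Re u ≥ 0`, `Im u` has the sign of `Im a`, and so has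
`Im (5u/2 - 1/u) = Im u (5/2 + |u|⁻²)`: the integral is not real when `a ∉ ℝ`. For real `a > -1`,
`5u/2 - 1/u` is increasing in `u ≥ √(2(1-t))`, which bounds `√2` times the integral below by
`∫₀¹ √t (4 - 5t) dt = 2/3`.
-/

open MeasureTheory Metric Filter Topology
open scoped Interval

theorem hasDerivAt_intervalIntegral_of_continuousOn {𝕜 E : Type*} [RCLike 𝕜]
    [NormedAddCommGroup E] [NormedSpace ℝ E] [NormedSpace 𝕜 E]
    {F F' : 𝕜 → ℝ → E} {U : Set 𝕜} {x₀ : 𝕜} {a b : ℝ} (hU : IsOpen U) (hx₀ : x₀ ∈ U)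
    (hF : ContinuousOn (Function.uncurry F) (U ×ˢ [[a, b]]))
    (hF' : ContinuousOn (Function.uncurry F') (U ×ˢ [[a, b]]))
    (hderiv : ∀ x ∈ U, ∀ t ∈ [[a, b]], HasDerivAt (F · t) (F' x t) x) :
    HasDerivAt (fun x => ∫ t in a..b, F x t) (∫ t in a..b, F' x₀ t) x₀ := by
  have slice {G : 𝕜 → ℝ → E} (hG : ContinuousOn (Function.uncurry G) (U ×ˢ [[a, b]]))
      {x : 𝕜} (hx : x ∈ U) : ContinuousOn (G x) [[a, b]] :=
    hG.comp (f := fun t => (x, t)) (Continuous.continuousOn (by fun_prop)) fun _ ht => ⟨hx, ht⟩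
  obtain ⟨ε, hε, hball⟩ := Metric.isOpen_iff.1 hU x₀ hx₀
  have hK : closedBall x₀ (ε / 2) ×ˢ [[a, b]] ⊆ U ×ˢ [[a, b]] :=
    prod_mono ((closedBall_subset_ball (half_lt_self hε)).trans hball) le_rfl
  obtain ⟨C, hC⟩ := ((isCompact_closedBall x₀ (ε / 2)).prod isCompact_uIcc)
    |>.exists_bound_of_continuousOn (hF'.mono hK)
  refine (hasDerivAt_integral_of_dominated_loc_of_deriv_le (bound := fun _ => C)
    (ball_mem_nhds x₀ (half_pos hε)) ?_ (slice hF hx₀).intervalIntegrable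
    ((slice hF' hx₀).mono uIoc_subset_uIcc |>.aestronglyMeasurable measurableSet_uIoc) ?_
    intervalIntegrable_const ?_).2
  · filter_upwards [hU.mem_nhds hx₀] with x hx
    exact (slice hF hx).mono uIoc_subset_uIcc |>.aestronglyMeasurable measurableSet_uIoc
  · exact ae_of_all _ fun t ht x hx => hC (x, t) ⟨ball_subset_closedBall hx, uIoc_subset_uIcc ht⟩
  · refine ae_of_all _ fun t ht x hx => hderiv x ?_ t (uIoc_subset_uIcc ht)
    exact hball (ball_subset_ball (half_le_self hε.le) hx)

lemma isOpen_compl_negRay : IsOpen negRayᶜ :=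
  ((isClosed_eq continuous_im continuous_const).inter
    (isClosed_le continuous_re continuous_const)).isOpen_compl

lemma ofReal_notMem_negRay {r : ℝ} (hr : -1 < r) : (r : ℂ) ∉ negRay :=
  fun h => hr.not_ge (by simpa using h.2)

lemma mul_sub_one_add_two_pos {r : ℝ} (hr : -1 < r) {t : ℝ} (ht : t ∈ Icc (0 : ℝ) 1) :
    0 < t * (r - 1) + 2 := by
  nlinarith [mul_nonneg ht.1 (by linarith : (0 : ℝ) ≤ r + 1), ht.2]

lemma mul_sub_one_add_two_mem_slitPlane {a : ℂ} (ha : a ∈ negRayᶜ) {t : ℝ}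
    (ht : t ∈ Icc (0 : ℝ) 1) :
    (t : ℂ) * (a - 1) + 2 ∈ slitPlane := by
  rw [mem_slitPlane_iff]
  by_cases him : a.im = 0
  · left
    simpa using mul_sub_one_add_two_pos (not_le.1 fun hle => ha ⟨him, hle⟩) ht
  · rcases ht.1.eq_or_lt with rfl | ht0
    · simp
    · right
      simpa using And.intro ht0.ne' him

def fOneRoot (a : ℂ) (t : ℝ) : ℂ := ((t : ℂ) * (a - 1) + 2) ^ ((1 : ℂ) / 2)

lemma fOneRoot_sq (a : ℂ) (t : ℝ) : fOneRoot a t ^ 2 = (t : ℂ) * (a - 1) + 2 := by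
  simp [fOneRoot]

lemma fOneRoot_ne_zero {a : ℂ} (ha : a ∈ negRayᶜ) {t : ℝ} (ht : t ∈ Icc (0 : ℝ) 1) :
    fOneRoot a t ≠ 0 := fun h => slitPlane_ne_zero (mul_sub_one_add_two_mem_slitPlane ha ht) <| by
  rw [← fOneRoot_sq, h, zero_pow two_ne_zero]

lemma fOneRoot_ofReal {r : ℝ} (hr : -1 < r) {t : ℝ} (ht : t ∈ Icc (0 : ℝ) 1) :
    fOneRoot r t = (√(t * (r - 1) + 2) : ℝ) := by
  rw [fOneRoot, Real.sqrt_eq_rpow, ofReal_cpow (mul_sub_one_add_two_pos hr ht).le]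
  push_cast
  ring_nf

lemma continuousOn_fOneRoot :
    ContinuousOn (Function.uncurry fOneRoot) (negRayᶜ ×ˢ Icc 0 1) :=
  ContinuousOn.cpow_const (Continuous.continuousOn (by fun_prop))
    fun p hp => mul_sub_one_add_two_mem_slitPlane hp.1 hp.2

lemma hasDerivAt_fOneRoot {x : ℂ} (hx : x ∈ negRayᶜ) {t : ℝ} (ht : t ∈ Icc (0 : ℝ) 1) :
    HasDerivAt (fOneRoot · t) (t / (2 * fOneRoot x t)) x := by
  have hz : HasDerivAt (fun y : ℂ => (t : ℂ) * (y - 1) + 2) t x := by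
    simpa using (((hasDerivAt_id x).sub_const 1).const_mul (t : ℂ)).add_const 2
  refine (hz.cpow_const (c := 1 / 2) (mul_sub_one_add_two_mem_slitPlane hx ht)).congr_deriv ?_
  have hne := fOneRoot_ne_zero hx ht
  rw [show (1 : ℂ) / 2 - 1 = -(1 / 2) by norm_num, cpow_neg]
  change 1 / 2 * (fOneRoot x t)⁻¹ * t = _
  field_simp

def criticalIntegrand (a : ℂ) (t : ℝ) : ℂ :=
  (√(t * (1 - t)) : ℂ) * (5 / 2 * fOneRoot a t - (fOneRoot a t)⁻¹)

def criticalIntegral (a : ℂ) : ℂ := ∫ t in (0 : ℝ)..1, criticalIntegrand a t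

lemma continuousOn_criticalIntegrand :
    ContinuousOn (Function.uncurry criticalIntegrand) (negRayᶜ ×ˢ Icc 0 1) := by
  have hroot := continuousOn_fOneRoot
  have hinv : ContinuousOn (fun p : ℂ × ℝ => (fOneRoot p.1 p.2)⁻¹) (negRayᶜ ×ˢ Icc 0 1) :=
    hroot.inv₀ fun p hp => fOneRoot_ne_zero hp.1 hp.2
  unfold criticalIntegrand
  fun_prop

lemma intervalIntegrable_criticalIntegrand {a : ℂ} (ha : a ∈ negRayᶜ) :
    IntervalIntegrable (criticalIntegrand a) volume 0 1 := by
  refine ContinuousOn.intervalIntegrable ?_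
  rw [uIcc_of_le zero_le_one]
  exact continuousOn_criticalIntegrand.comp (f := fun t => (a, t))
    (Continuous.continuousOn (by fun_prop)) fun _ ht => ⟨ha, ht⟩

lemma hasDerivAt_sq_mul_fOneRoot {x : ℂ} (hx : x ∈ negRayᶜ) {t : ℝ} (ht : t ∈ Icc (0 : ℝ) 1) :
    HasDerivAt (fun y => (y - 1) ^ 2 * fOneRoot y t)
      ((x - 1) * (5 / 2 * fOneRoot x t - (fOneRoot x t)⁻¹)) x := by
  refine ((((hasDerivAt_id x).sub_const 1).fun_pow 2).fun_mul
    (hasDerivAt_fOneRoot hx ht)).congr_deriv ?_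
  have hne := fOneRoot_ne_zero hx ht
  have hroot := fOneRoot_sq x t
  simp only [id]
  field_simp
  linear_combination (1 - x) * hroot

lemma hasDerivAt_fOne (θ : ℝ) {a : ℂ} (ha : a ∈ negRayᶜ) :
    HasDerivAt (fOne θ) (I * exp (I * θ) * (a - 1) * criticalIntegral a) a := by
  have hU : [[(0 : ℝ), 1]] = Icc 0 1 := uIcc_of_le zero_le_one
  have key := hasDerivAt_intervalIntegral_of_continuousOn
    (F := fun x t => I * exp (I * θ) * (x - 1) ^ 2 * ((√(t * (1 - t)) : ℂ) * fOneRoot x t))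
    (F' := fun x t => I * exp (I * θ) * (x - 1) * criticalIntegrand x t)
    (a := 0) (b := 1) isOpen_compl_negRay ha ?_ ?_ ?_
  · simp only [intervalIntegral.integral_const_mul] at key
    exact key
  · have hroot := continuousOn_fOneRoot
    rw [hU]
    fun_prop
  · have hcrit := continuousOn_criticalIntegrand
    rw [hU]
    fun_prop
  · rw [hU]
    intro x hx t ht
    exact ((hasDerivAt_sq_mul_fOneRoot hx ht).const_mul (I * exp (I * θ) * √(t * (1 - t)))
      |>.congr_deriv (by simp only [criticalIntegrand]; ring)).congr_of_eventuallyEq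
        (.of_forall fun y => by ring)

lemma im_mul_im_cpow_inv_two_pos {z : ℂ} (hz : z.im ≠ 0) : 0 < z.im * (z ^ (2⁻¹ : ℂ)).im := by
  set u := z ^ (2⁻¹ : ℂ)
  have hre : 0 ≤ u.re := (cpow_inv_two_re z).symm ▸ Real.sqrt_nonneg _
  have hz' : z.im = 2 * u.re * u.im := by
    rw [← cpow_ofNat_inv_pow z 2, sq, mul_im]
    ring
  rw [hz'] at hz ⊢
  have hre' : 0 < u.re := hre.lt_of_ne fun h => hz (by rw [← h]; ring)
  have him : u.im ≠ 0 := fun h => hz (by rw [h]; ring)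
  nlinarith [mul_pos hre' (mul_self_pos.2 him)]

lemma im_mul_im_fOneRoot_pos {a : ℂ} (ha : a.im ≠ 0) {t : ℝ} (ht : 0 < t) :
    0 < a.im * (fOneRoot a t).im := by
  rw [fOneRoot, one_div]
  have h := im_mul_im_cpow_inv_two_pos (z := (t : ℂ) * (a - 1) + 2) (by simp [ht.ne', ha])
  simp only [add_im, mul_im, ofReal_re, ofReal_im, sub_im, one_im, sub_zero, zero_mul, add_zero,
    im_ofNat] at h
  rw [mul_assoc] at h
  exact pos_of_mul_pos_right h ht.le

lemma im_criticalIntegrand_mul_im_pos {a : ℂ} (ha : a.im ≠ 0) {t : ℝ} (ht : t ∈ Ioo (0 : ℝ) 1) :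
    0 < (criticalIntegrand a t).im * a.im := by
  have hu := im_mul_im_fOneRoot_pos ha ht.1
  have hs : 0 < √(t * (1 - t)) := Real.sqrt_pos.2 (mul_pos ht.1 (sub_pos.2 ht.2))
  have hn : 0 < normSq (fOneRoot a t) :=
    normSq_pos.2 (fOneRoot_ne_zero (fun h => ha h.1) ⟨ht.1.le, ht.2.le⟩)
  have him : (criticalIntegrand a t).im * a.im =
      √(t * (1 - t)) * (a.im * (fOneRoot a t).im) * (5 / 2 + (normSq (fOneRoot a t))⁻¹) := by
    simp only [criticalIntegrand, mul_im, sub_im, sub_re, mul_re, inv_im, ofReal_re, ofReal_im,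
      div_ofNat_re, div_ofNat_im, re_ofNat, im_ofNat]
    ring
  rw [him]
  positivity

lemma im_criticalIntegral_mul_im_pos {a : ℂ} (ha : a.im ≠ 0) :
    0 < (criticalIntegral a).im * a.im := by
  have hint := intervalIntegrable_criticalIntegrand (a := a) fun h => ha h.1
  have him : (criticalIntegral a).im = ∫ t in (0 : ℝ)..1, (criticalIntegrand a t).im :=
    (intervalIntegral_im hint).symm
  rw [him, ← intervalIntegral.integral_mul_const]
  exact intervalIntegral_pos_of_pos_on (IntervalIntegrable.mul_const ⟨hint.1.im, hint.2.im⟩ _)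
    (fun t ht => im_criticalIntegrand_mul_im_pos ha ht) one_pos

lemma five_halves_sq_sub_one_le {m v : ℝ} (hm : 0 ≤ m) (hmv : m ≤ v) :
    5 / 2 * m ^ 2 - 1 ≤ m * (5 / 2 * v - v⁻¹) := by
  rcases hm.eq_or_lt with rfl | hm
  · norm_num
  have hv : 0 < v := hm.trans_le hmv
  have key : m * (5 / 2 * v - v⁻¹) - (5 / 2 * m ^ 2 - 1) = (v - m) * (5 / 2 * m + v⁻¹) := by
    field_simp
    ring
  rw [← sub_nonneg, key]
  exact mul_nonneg (sub_nonneg.2 hmv) (by positivity)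

lemma sqrt_mul_four_sub_five_mul_le {r : ℝ} (hr : -1 < r) {t : ℝ} (ht : t ∈ Icc (0 : ℝ) 1) :
    √t * (4 - 5 * t) ≤ √2 * (criticalIntegrand r t).re := by
  set v := √(t * (r - 1) + 2)
  set m := √(2 * (1 - t))
  have hmv : m ≤ v := Real.sqrt_le_sqrt (by nlinarith [mul_nonneg ht.1 (by linarith : 0 ≤ r + 1)])
  have hm : m ^ 2 = 2 * (1 - t) := Real.sq_sqrt (by linarith [ht.2])
  have hs : √2 * √(t * (1 - t)) = √t * m := by
    rw [← Real.sqrt_mul zero_le_two, ← Real.sqrt_mul ht.1]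
    ring_nf
  have hre : (criticalIntegrand r t).re = √(t * (1 - t)) * (5 / 2 * v - v⁻¹) := by
    rw [criticalIntegrand, fOneRoot_ofReal hr ht, ← ofReal_re (√(t * (1 - t)) * _)]
    push_cast
    rfl
  calc √t * (4 - 5 * t) = √t * (5 / 2 * m ^ 2 - 1) := by rw [hm]; ring
    _ ≤ √t * (m * (5 / 2 * v - v⁻¹)) :=
      mul_le_mul_of_nonneg_left (five_halves_sq_sub_one_le (Real.sqrt_nonneg _) hmv)
        (Real.sqrt_nonneg _)
    _ = √2 * (criticalIntegrand r t).re := by rw [hre, ← mul_assoc √2, hs]; ring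

lemma integral_sqrt_mul_four_sub_five_mul : ∫ t in (0 : ℝ)..1, √t * (4 - 5 * t) = 2 / 3 := by
  have h : ∀ t ∈ [[(0 : ℝ), 1]], √t * (4 - 5 * t) = 4 * t ^ (1 / 2 : ℝ) - 5 * t ^ (3 / 2 : ℝ) := by
    intro t ht
    rw [uIcc_of_le zero_le_one] at ht
    rw [Real.sqrt_eq_rpow, show (3 / 2 : ℝ) = 1 + 1 / 2 by norm_num,
      Real.rpow_add' ht.1 (by norm_num), Real.rpow_one]
    ring
  rw [intervalIntegral.integral_congr h, intervalIntegral.integral_sub,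
    intervalIntegral.integral_const_mul, intervalIntegral.integral_const_mul,
    integral_rpow (by norm_num), integral_rpow (by norm_num)]
  · norm_num
  all_goals exact (intervalIntegral.intervalIntegrable_rpow' (by norm_num)).const_mul _

lemma re_criticalIntegral_ofReal_pos {r : ℝ} (hr : -1 < r) : 0 < (criticalIntegral r).re := by
  have hint := intervalIntegrable_criticalIntegrand (ofReal_notMem_negRay hr)
  have h := intervalIntegral.integral_mono_on zero_le_one
    ((by fun_prop : Continuous fun t : ℝ => √t * (4 - 5 * t)).intervalIntegrable 0 1)
    (IntervalIntegrable.const_mul (f := fun t => (criticalIntegrand r t).re)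
      ⟨hint.1.re, hint.2.re⟩ √2)
    fun t ht => sqrt_mul_four_sub_five_mul_le hr ht
  have hre : (criticalIntegral r).re = ∫ t in (0 : ℝ)..1, (criticalIntegrand r t).re :=
    (intervalIntegral_re hint).symm
  rw [integral_sqrt_mul_four_sub_five_mul, intervalIntegral.integral_const_mul, ← hre] at h
  nlinarith [Real.sqrt_nonneg 2]

lemma criticalIntegral_ne_zero {a : ℂ} (ha : a ∈ negRayᶜ) : criticalIntegral a ≠ 0 := by
  intro h
  by_cases him : a.im = 0
  · have hr : -1 < a.re := not_le.1 fun hle => ha ⟨him, hle⟩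
    have hpos := re_criticalIntegral_ofReal_pos hr
    rw [show (a.re : ℂ) = a from ext rfl him.symm, h, zero_re] at hpos
    exact hpos.false
  · have hpos := im_criticalIntegral_mul_im_pos him
    rw [h, zero_im, zero_mul] at hpos
    exact hpos.false

theorem stmt8_general (θ : ℝ) :
    ∀ a ∈ negRayᶜ, a ≠ 1 → (fOne θ a).re = 0 → deriv (fOne θ) a ≠ 0 := by
  intro a ha ha1 _
  rw [(hasDerivAt_fOne θ ha).deriv]
  exact mul_ne_zero (mul_ne_zero (mul_ne_zero I_ne_zero (exp_ne_zero _)) (sub_ne_zero.2 ha1))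
    (criticalIntegral_ne_zero ha)

/-- `a = 1` is the only critical point of `u = Re f_{1,θ}` on its zero level set:
there is no `a ≠ 1` in `ℂ \ (-∞,-1]` with `Re f_{1,θ}(a) = 0` and `f'_{1,θ}(a) = 0`. -/
theorem stmt8 (θ : ℝ) (hθ : θ ∈ Ico (0:ℝ) (Real.pi / 2)) :
    ∀ a ∈ negRayᶜ, a ≠ 1 → (fOne θ a).re = 0 → deriv (fOne θ) a ≠ 0 :=
  stmt8_general θ
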